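/- arXiv:2308.07641 — 2 statements merged into one kernel-verified Lean document; each statement's English description precedes it below -/
import Mathlib

section
/- The lower bound $\min_a \max_{1\leq k \leq N} \frac{\sum_{i=0}^{k-1} a[i]}{\sqrt{k}} = \gamma_N$ is attained: the minimum over all nonnegative non-increasing unit vectors $a \in \mathbb{R}^N$ equals exactly $\gamma_N = \left(\sum_{k=1}^{N}(\sqrt{k}-\sqrt{k-1})^2\right)^{-1/2}$, with equality achieved by the vector $a^*[i] = \gamma_N(\sqrt{i+1}-\sqrt{i})$ for $0 \leq i \leq N-1$. -/
open Finset

noncomputable def gamma (N : ℕ) : ℝ :=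
  1 / Real.sqrt (∑ k ∈ Finset.range N, (Real.sqrt (k + 1) - Real.sqrt k) ^ 2)

/-!
Write `b i = √(i+1) - √i`, so that `∑_{i<k} b i = √k`. If every partial sum `A k` of `a` is at
most `M √k`, Abel summation against the non-negative non-increasing weights `a i` gives
`∑ a i ^ 2 ≤ M ∑ a i b i`, and Cauchy–Schwarz bounds the right side by `M √(∑ b i ^ 2)`.
Hence `max_k A k / √k ≥ 1 / √(∑ b i ^ 2) = γ_N`, with equality for `a = γ_N b`, whose
normalized partial sums are all exactly `γ_N`.
-/

lemma sum_range_sqrt_succ_sub_sqrt (n : ℕ) :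
    ∑ i ∈ range n, (√((i : ℝ) + 1) - √(i : ℝ)) = √(n : ℝ) := by
  simpa using sum_range_sub (fun i : ℕ => √(i : ℝ)) n

lemma sqrt_succ_sub_sqrt_pos (x : ℝ) (hx : 0 ≤ x) : 0 < √(x + 1) - √x :=
  sub_pos.2 (Real.sqrt_lt_sqrt hx (lt_add_one x))

lemma sqrt_succ_sub_sqrt_eq_one_div (x : ℝ) (hx : 0 ≤ x) :
    √(x + 1) - √x = 1 / (√(x + 1) + √x) := by
  have hpos : 0 < √(x + 1) + √x := by positivity
  rw [eq_div_iff hpos.ne', mul_comm, ← sq_sub_sq, Real.sq_sqrt (by positivity), Real.sq_sqrt hx]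
  ring

lemma antitoneOn_sqrt_succ_sub_sqrt : AntitoneOn (fun x : ℝ => √(x + 1) - √x) (Set.Ici 0) := by
  intro x hx y hy hxy
  simp only [sqrt_succ_sub_sqrt_eq_one_div x hx, sqrt_succ_sub_sqrt_eq_one_div y hy]
  have hden : 0 < √(x + 1) + √x :=
    add_pos_of_pos_of_nonneg (Real.sqrt_pos.2 (by linarith [Set.mem_Ici.1 hx])) (Real.sqrt_nonneg x)
  exact one_div_le_one_div_of_le hden
    (add_le_add (Real.sqrt_le_sqrt (by linarith)) (Real.sqrt_le_sqrt hxy))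

/-- Abel's inequality. -/
lemma sum_mul_le_sum_mul_of_sum_range_le {R : Type*} [CommRing R] [LinearOrder R]
    [IsOrderedRing R] {a x y : ℕ → R} {n : ℕ} (ha : AntitoneOn a (Set.Iio n))
    (ha₀ : ∀ i < n, 0 ≤ a i) (hxy : ∀ k ≤ n, ∑ i ∈ range k, x i ≤ ∑ i ∈ range k, y i) :
    ∑ i ∈ range n, a i * x i ≤ ∑ i ∈ range n, a i * y i := by
  set z : ℕ → R := fun i => y i - x i
  have hz : ∀ k ≤ n, 0 ≤ ∑ i ∈ range k, z i := fun k hk => by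
    simpa [z, sum_sub_distrib] using hxy k hk
  have hinv : ∀ m < n, a m * ∑ i ∈ range (m + 1), z i ≤ ∑ i ∈ range (m + 1), a i * z i := by
    intro m hm
    induction m with
    | zero => simp
    | succ m ih =>
      have hstep : a (m + 1) * ∑ i ∈ range (m + 1), z i ≤ a m * ∑ i ∈ range (m + 1), z i :=
        mul_le_mul_of_nonneg_right (ha (by simp; omega) (by simpa using hm) (by omega))
          (hz _ (by omega))
      rw [sum_range_succ _ (m + 1), sum_range_succ _ (m + 1), mul_add]
      exact add_le_add_left (hstep.trans (ih (by omega))) _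
  suffices 0 ≤ ∑ i ∈ range n, a i * z i by simpa [z, mul_sub, sum_sub_distrib] using this
  rcases n with _ | m
  · simp
  · exact (mul_nonneg (ha₀ m (by omega)) (hz _ le_rfl)).trans (hinv m (by omega))

lemma sum_range_sq_sqrt_succ_sub_sqrt_pos {N : ℕ} (hN : 1 ≤ N) :
    0 < ∑ k ∈ range N, (√((k : ℝ) + 1) - √(k : ℝ)) ^ 2 :=
  sum_pos (fun k _ => pow_pos (sqrt_succ_sub_sqrt_pos k k.cast_nonneg) 2) ⟨0, mem_range.2 hN⟩

lemma gamma_pos {N : ℕ} (hN : 1 ≤ N) : 0 < gamma N :=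
  one_div_pos.2 (Real.sqrt_pos.2 (sum_range_sq_sqrt_succ_sub_sqrt_pos hN))

lemma gamma_sq_mul_sum_sq {N : ℕ} (hN : 1 ≤ N) :
    gamma N ^ 2 * ∑ k ∈ range N, (√((k : ℝ) + 1) - √(k : ℝ)) ^ 2 = 1 := by
  have hS := sum_range_sq_sqrt_succ_sub_sqrt_pos hN
  rw [gamma, div_pow, one_pow, Real.sq_sqrt hS.le, one_div_mul_cancel hS.ne']

lemma gamma_le_of_sum_range_le_mul_sqrt {N : ℕ} (hN : 1 ≤ N) {a : ℕ → ℝ} {M : ℝ}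
    (ha : AntitoneOn a (Set.Iio N)) (ha₀ : ∀ i < N, 0 ≤ a i)
    (ha₂ : ∑ i ∈ range N, a i ^ 2 = 1) (hM₀ : 0 ≤ M)
    (hM : ∀ k, 1 ≤ k → k ≤ N → ∑ i ∈ range k, a i ≤ M * √(k : ℝ)) :
    gamma N ≤ M := by
  set S := ∑ k ∈ range N, (√((k : ℝ) + 1) - √(k : ℝ)) ^ 2
  have hpartial : ∀ k ≤ N, ∑ i ∈ range k, a i ≤
      ∑ i ∈ range k, M * (√((i : ℝ) + 1) - √(i : ℝ)) := fun k hk => by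
    rw [← mul_sum, sum_range_sqrt_succ_sub_sqrt]
    rcases k with _ | k
    · simp
    · exact hM _ (by omega) hk
  have habel : 1 ≤ M * ∑ i ∈ range N, a i * (√((i : ℝ) + 1) - √(i : ℝ)) := by
    simpa only [← sq, ha₂, mul_left_comm (a _) M, ← mul_sum] using
      sum_mul_le_sum_mul_of_sum_range_le ha ha₀ hpartial
  have hcs : ∑ i ∈ range N, a i * (√((i : ℝ) + 1) - √(i : ℝ)) ≤ √S := by
    simpa [ha₂] using Real.sum_mul_le_sqrt_mul_sqrt (range N) a
      (fun i : ℕ => √((i : ℝ) + 1) - √(i : ℝ))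
  have hS : 0 < √S := Real.sqrt_pos.2 (sum_range_sq_sqrt_succ_sub_sqrt_pos hN)
  rw [gamma, div_le_iff₀ hS]
  exact habel.trans (mul_le_mul_of_nonneg_left hcs hM₀)

theorem minimax_attained (N : ℕ) (hN : 1 ≤ N) :
    (∀ a : ℕ → ℝ, (∀ i j, i ≤ j → j < N → a j ≤ a i) →
      (∀ i, i < N → 0 ≤ a i) → (∑ i ∈ Finset.range N, a i ^ 2 = 1) →
      ∃ k, 1 ≤ k ∧ k ≤ N ∧
        gamma N ≤ (∑ i ∈ Finset.range k, a i) / Real.sqrt k) ∧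
    ((∀ i j, i ≤ j → j < N →
        gamma N * (Real.sqrt (j + 1) - Real.sqrt j) ≤
          gamma N * (Real.sqrt (i + 1) - Real.sqrt i)) ∧
      (∀ i, i < N → 0 ≤ gamma N * (Real.sqrt (i + 1) - Real.sqrt i)) ∧
      (∑ i ∈ Finset.range N, (gamma N * (Real.sqrt (i + 1) - Real.sqrt i)) ^ 2 = 1) ∧
      ∀ k, 1 ≤ k → k ≤ N →
        (∑ i ∈ Finset.range k, gamma N * (Real.sqrt (i + 1) - Real.sqrt i)) /
          Real.sqrt k = gamma N) := by
  have hγ := gamma_pos hN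
  refine ⟨fun a ha ha₀ ha₂ => ?_, fun i j hij _ => ?_, fun i _ => ?_, ?_, fun k hk _ => ?_⟩
  · obtain ⟨k, hk, hmax⟩ := exists_max_image (Icc 1 N)
      (fun m : ℕ => (∑ i ∈ range m, a i) / √(m : ℝ)) ⟨1, mem_Icc.2 ⟨le_rfl, hN⟩⟩
    obtain ⟨hk₁, hkN⟩ := mem_Icc.1 hk
    refine ⟨k, hk₁, hkN, gamma_le_of_sum_range_le_mul_sqrt hN
      (fun i hi j hj hij => ha i j hij hj) ha₀ ha₂ ?_ fun m hm₁ hmN => ?_⟩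
    · exact div_nonneg (sum_nonneg fun i hi => ha₀ i ((mem_range.1 hi).trans_le hkN))
        (Real.sqrt_nonneg _)
    · have hm : 0 < √(m : ℝ) := Real.sqrt_pos.2 (by exact_mod_cast hm₁)
      exact (div_le_iff₀ hm).1 (hmax m (mem_Icc.2 ⟨hm₁, hmN⟩))
  · exact mul_le_mul_of_nonneg_left (antitoneOn_sqrt_succ_sub_sqrt
      (Set.mem_Ici.2 i.cast_nonneg) (Set.mem_Ici.2 j.cast_nonneg) (by exact_mod_cast hij)) hγ.le
  · exact mul_nonneg hγ.le (sqrt_succ_sub_sqrt_pos i i.cast_nonneg).le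
  · simp only [mul_pow, ← mul_sum, gamma_sq_mul_sum_sq hN]
  · have hk : 0 < √(k : ℝ) := Real.sqrt_pos.2 (by exact_mod_cast hk)
    rw [← mul_sum, sum_range_sqrt_succ_sub_sqrt, mul_div_cancel_right₀ _ hk.ne']
end

section
/- Among all ternary vectors $t \in \{-1,0,1\}^N$ whose angle with a given $x \in \mathbb{R}^N \setminus \{0\}$ has cosine at least $\cos\theta$ (i.e., $\langle x,t\rangle / (\|x\|\sqrt{\|t\|_0}) \geq \cos\theta$), if this set is nonempty then it contains a vector of minimal $\|t\|_0$ of the form: $t[i] \in \{0, \mathrm{sign}(x[i])\}$ for all $i$, and the set of nonzero indices of $t$ equals the indices of the top-$q$ absolute values of $x$ for some $q$. -/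
/-! Fix a ternary `t` and a set `S` of `|supp t|` indices carrying the largest `|x i|`. Putting
the signs of `x` on `S` can only increase the inner product with `x` (to `∑ i ∈ S, |x i|`) and can
only shrink the support (by the indices with `x i = 0`), so the cosine does not decrease. Starting
from a feasible `t` of minimal support, minimality then forces the new support to be all of `S`. -/

open Finset
open scoped Classical

/-- The support of a vector as a finite set. -/
noncomputable def supp {N : ℕ} (t : Fin N → ℝ) : Finset (Fin N) :=
  Finset.univ.filter fun i => t i ≠ 0

theorem Real.self_mul_sign (x : ℝ) : x * Real.sign x = |x| := by
  rcases lt_trichotomy x 0 with h | rfl | h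
  · rw [Real.sign_of_neg h, abs_of_neg h, mul_neg_one]
  · simp
  · rw [Real.sign_of_pos h, abs_of_pos h, mul_one]

section TopSet

variable {ι α : Type*}

def IsTopSet [LE α] (f : ι → α) (S : Finset ι) : Prop :=
  ∀ i ∈ S, ∀ j ∉ S, f j ≤ f i

theorem exists_isTopSet_card_eq [Fintype ι] [LinearOrder α] (f : ι → α) {q : ℕ}
    (hq : q ≤ Fintype.card ι) : ∃ S : Finset ι, S.card = q ∧ IsTopSet f S := by
  induction q with
  | zero => exact ⟨∅, rfl, by simp [IsTopSet]⟩
  | succ q ih =>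
    obtain ⟨S, hcard, htop⟩ := ih (Nat.le_of_succ_le hq)
    have hrest : Sᶜ.Nonempty := by
      rw [← card_pos, card_compl, hcard]
      omega
    obtain ⟨b, hb, hbmax⟩ := exists_max_image Sᶜ f hrest
    have hbS : b ∉ S := mem_compl.mp hb
    refine ⟨insert b S, by rw [card_insert_of_notMem hbS, hcard], ?_⟩
    intro i hi j hj
    rw [mem_insert, not_or] at hj
    rcases mem_insert.mp hi with rfl | hiS
    · exact hbmax j (mem_compl.mpr hj.2)
    · exact htop i hiS j hj.2

variable [AddCommMonoid α] [LinearOrder α] [IsOrderedAddMonoid α]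

theorem Finset.sum_le_sum_of_card_le_of_forall_le {f : ι → α} {B C : Finset ι}
    (hcard : B.card ≤ C.card) (hle : ∀ j ∈ B, ∀ i ∈ C, f j ≤ f i)
    (hf : ∀ i ∈ C, 0 ≤ f i) : ∑ j ∈ B, f j ≤ ∑ i ∈ C, f i := by
  rcases C.eq_empty_or_nonempty with rfl | hC
  · simp [card_eq_zero.mp (Nat.le_zero.mp hcard)]
  obtain ⟨m, hm, hmin⟩ := C.exists_min_image f hC
  calc ∑ j ∈ B, f j ≤ B.card • f m := sum_le_card_nsmul _ _ _ fun j hj => hle j hj m hm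
    _ ≤ C.card • f m := nsmul_le_nsmul_left (hf m hm) hcard
    _ ≤ ∑ i ∈ C, f i := card_nsmul_le_sum _ _ _ hmin

theorem IsTopSet.sum_le {f : ι → α} {S : Finset ι} (hS : IsTopSet f S)
    (hf : ∀ i ∈ S, 0 ≤ f i) {A : Finset ι} (hcard : A.card ≤ S.card) :
    ∑ i ∈ A, f i ≤ ∑ i ∈ S, f i := by
  rw [← sum_inter_add_sum_sdiff A S, ← sum_inter_add_sum_sdiff S A, inter_comm]
  refine add_le_add_right (sum_le_sum_of_card_le_of_forall_le ?_ ?_ ?_) _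
  · exact card_sdiff_le_card_sdiff_iff.mpr hcard
  · exact fun j hj i hi => hS i (mem_sdiff.mp hi).1 j (mem_sdiff.mp hj).2
  · exact fun i hi => hf i (mem_sdiff.mp hi).1

end TopSet

section Ternary

variable {ι : Type*}

def IsTernary (t : ι → ℝ) : Prop :=
  ∀ i, t i = -1 ∨ t i = 0 ∨ t i = 1

noncomputable def signOn (S : Finset ι) (x : ι → ℝ) : ι → ℝ :=
  fun i => if i ∈ S then Real.sign (x i) else 0

theorem isTernary_signOn (S : Finset ι) (x : ι → ℝ) : IsTernary (signOn S x) := by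
  intro i
  unfold signOn
  split_ifs
  · exact Real.sign_apply_eq (x i)
  · exact Or.inr (Or.inl rfl)

theorem signOn_eq_zero_or_eq_sign (S : Finset ι) (x : ι → ℝ) (i : ι) :
    signOn S x i = 0 ∨ signOn S x i = Real.sign (x i) := by
  unfold signOn
  split_ifs
  · exact Or.inr rfl
  · exact Or.inl rfl

theorem sum_mul_signOn [Fintype ι] (S : Finset ι) (x : ι → ℝ) :
    ∑ i, x i * signOn S x i = ∑ i ∈ S, |x i| := by
  simp only [signOn, mul_ite, mul_zero, Real.self_mul_sign, sum_ite_mem, univ_inter]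

variable {N : ℕ}

noncomputable def cosineScore (x t : Fin N → ℝ) : ℝ :=
  (∑ i, x i * t i) / (Real.sqrt (∑ i, x i ^ 2) * Real.sqrt (supp t).card)

theorem supp_signOn (S : Finset (Fin N)) (x : Fin N → ℝ) :
    supp (signOn S x) = S.filter fun i => x i ≠ 0 := by
  ext i
  by_cases hi : i ∈ S <;> simp [supp, signOn, hi, Real.sign_eq_zero_iff]

theorem IsTernary.sum_mul_le {t : Fin N → ℝ} (ht : IsTernary t) (x : Fin N → ℝ) :
    ∑ i, x i * t i ≤ ∑ i ∈ supp t, |x i| := by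
  rw [supp, sum_filter]
  refine sum_le_sum fun i _ => ?_
  rcases ht i with h | h | h <;> simp [h, neg_le_abs, le_abs_self]

theorem cosineScore_le_cosineScore_signOn {x t : Fin N → ℝ} (ht : IsTernary t)
    {S : Finset (Fin N)} (hS : IsTopSet (fun i => |x i|) S) (hcard : S.card = (supp t).card) :
    cosineScore x t ≤ cosineScore x (signOn S x) := by
  have hnum : ∑ i, x i * t i ≤ ∑ i ∈ S, |x i| :=
    (ht.sum_mul_le x).trans (hS.sum_le (fun i _ => abs_nonneg (x i)) hcard.ge)
  have hsupp : (supp (signOn S x)).card ≤ (supp t).card := by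
    rw [← hcard, supp_signOn]
    exact card_filter_le _ _
  unfold cosineScore
  rw [sum_mul_signOn]
  rcases (sum_nonneg fun i (_ : i ∈ S) => abs_nonneg (x i)).eq_or_lt with hzero | hpos
  · rw [← hzero, zero_div]
    exact div_nonpos_of_nonpos_of_nonneg (hzero ▸ hnum) (by positivity)
  obtain ⟨i, hiS, hxi⟩ : ∃ i ∈ S, x i ≠ 0 := by
    by_contra! h
    exact hpos.ne' (sum_eq_zero fun i hi => by simp [h i hi])
  have hnorm : 0 < Real.sqrt (∑ i, x i ^ 2) :=
    Real.sqrt_pos.mpr (sum_pos' (fun j _ => sq_nonneg (x j)) ⟨i, mem_univ i, by positivity⟩)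
  have hsupp_pos : (0 : ℝ) < (supp (signOn S x)).card := by
    rw [supp_signOn]
    exact_mod_cast card_pos.mpr ⟨i, mem_filter.mpr ⟨hiS, hxi⟩⟩
  refine div_le_div₀ hpos.le hnum (by positivity) ?_
  gcongr

end Ternary

theorem minimal_sparse_ternarization_structure_general (N : ℕ) (x : Fin N → ℝ)
    (θ : ℝ)
    (hne : ∃ t : Fin N → ℝ, (∀ i, t i = -1 ∨ t i = 0 ∨ t i = 1) ∧
      Real.cos θ ≤ (∑ i, x i * t i) /
        (Real.sqrt (∑ i, x i ^ 2) * Real.sqrt (supp t).card)) :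
    ∃ t : Fin N → ℝ, (∀ i, t i = -1 ∨ t i = 0 ∨ t i = 1) ∧
      Real.cos θ ≤ (∑ i, x i * t i) /
        (Real.sqrt (∑ i, x i ^ 2) * Real.sqrt (supp t).card) ∧
      (∀ t' : Fin N → ℝ, (∀ i, t' i = -1 ∨ t' i = 0 ∨ t' i = 1) →
        Real.cos θ ≤ (∑ i, x i * t' i) /
          (Real.sqrt (∑ i, x i ^ 2) * Real.sqrt (supp t').card) →
        (supp t).card ≤ (supp t').card) ∧
      (∀ i, t i = 0 ∨ t i = Real.sign (x i)) ∧
      (∃ q, (supp t).card = q ∧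
        ∀ i ∈ supp t, ∀ j ∉ supp t, |x j| ≤ |x i|) := by
  obtain ⟨t₀, ⟨ht₀, hcos₀⟩, hmin⟩ := (measure fun t : Fin N → ℝ => (supp t).card).wf.has_min
    {t | IsTernary t ∧ Real.cos θ ≤ cosineScore x t} hne
  obtain ⟨S, hS, htop⟩ := exists_isTopSet_card_eq (fun i => |x i|) (card_le_univ (supp t₀))
  set t := signOn S x
  have ht : IsTernary t := isTernary_signOn S x
  have hcos : Real.cos θ ≤ cosineScore x t :=
    hcos₀.trans (cosineScore_le_cosineScore_signOn ht₀ htop hS)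
  have hsub : supp t ⊆ S := by
    rw [supp_signOn]
    exact filter_subset _ _
  have hcard : (supp t).card = (supp t₀).card :=
    le_antisymm (hS ▸ card_le_card hsub) (not_lt.mp (hmin t ⟨ht, hcos⟩))
  have hsupp : supp t = S := eq_of_subset_of_card_le hsub (hS.trans hcard.symm).le
  refine ⟨t, ht, hcos, fun t' ht' hcos' => ?_, signOn_eq_zero_or_eq_sign S x, _, rfl, ?_⟩
  · exact hcard ▸ not_lt.mp (hmin t' ⟨ht', hcos'⟩)
  · exact hsupp ▸ htop

/-- Among ternary vectors within angle `θ` of `x`, there is one of minimal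
`ℓ₀` norm with the sign/top-`q` structure. -/
theorem minimal_sparse_ternarization_structure (N : ℕ) (x : Fin N → ℝ)
    (hx : x ≠ 0) (θ : ℝ) (hθ₁ : 0 < θ) (hθ₂ : θ < Real.pi / 2)
    (hne : ∃ t : Fin N → ℝ, (∀ i, t i = -1 ∨ t i = 0 ∨ t i = 1) ∧
      Real.cos θ ≤ (∑ i, x i * t i) /
        (Real.sqrt (∑ i, x i ^ 2) * Real.sqrt (supp t).card)) :
    ∃ t : Fin N → ℝ, (∀ i, t i = -1 ∨ t i = 0 ∨ t i = 1) ∧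
      Real.cos θ ≤ (∑ i, x i * t i) /
        (Real.sqrt (∑ i, x i ^ 2) * Real.sqrt (supp t).card) ∧
      (∀ t' : Fin N → ℝ, (∀ i, t' i = -1 ∨ t' i = 0 ∨ t' i = 1) →
        Real.cos θ ≤ (∑ i, x i * t' i) /
          (Real.sqrt (∑ i, x i ^ 2) * Real.sqrt (supp t').card) →
        (supp t).card ≤ (supp t').card) ∧
      (∀ i, t i = 0 ∨ t i = Real.sign (x i)) ∧
      (∃ q, (supp t).card = q ∧
        ∀ i ∈ supp t, ∀ j ∉ supp t, |x j| ≤ |x i|) :=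
  minimal_sparse_ternarization_structure_general N x θ hne
end
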